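/- In C², at most three pairwise mutually unbiased orthonormal bases exist: any collection of pairwise mutually unbiased orthonormal bases of C² has cardinality at most 3. -/

import Mathlib

open Matrix BigOperators

/-!
The Bloch map `v ↦ (2 Re v₀v̄₁, 2 Im v₀v̄₁, |v₀|² - |v₁|²)` satisfies
`⟪r_v, r_w⟫ = 2 |⟨v, w⟩|² - ‖v‖² ‖w‖²`. Hence it sends unit vectors to unit vectors of `ℝ³`, and
unit vectors with `|⟨v, w⟩|² = 1/2` to orthogonal ones. Choosing one vector from each basis of a
family of pairwise mutually unbiased bases thus yields an orthonormal family in `ℝ³`, which has at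
most three members.
-/

open ComplexConjugate in
noncomputable def blochVector (v : Fin 2 → ℂ) : EuclideanSpace ℝ (Fin 3) :=
  !₂[2 * (v 0 * conj (v 1)).re, 2 * (v 0 * conj (v 1)).im,
    Complex.normSq (v 0) - Complex.normSq (v 1)]

theorem inner_blochVector (v w : Fin 2 → ℂ) :
    inner ℝ (blochVector v) (blochVector w) =
      2 * ‖star v ⬝ᵥ w‖ ^ 2 - (star v ⬝ᵥ v).re * (star w ⬝ᵥ w).re := by
  rw [← Complex.normSq_eq_norm_sq]
  simp only [blochVector, PiLp.inner_apply, RCLike.inner_apply, conj_trivial, Fin.sum_univ_three,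
    dotProduct, Fin.sum_univ_two, Pi.star_apply, Fin.isValue, cons_val_zero, cons_val_one,
    cons_val, RCLike.star_def, Complex.mul_re, Complex.mul_im, Complex.add_re, Complex.add_im,
    Complex.conj_re, Complex.conj_im, Complex.normSq_apply]
  ring

theorem orthonormal_blochVector {ι : Type*} (v : ι → Fin 2 → ℂ)
    (hunit : ∀ k, star (v k) ⬝ᵥ v k = 1)
    (hunbiased : Pairwise fun k l => ‖star (v k) ⬝ᵥ v l‖ ^ 2 = 1 / 2) :
    Orthonormal ℝ (blochVector ∘ v) := by
  classical
  rw [orthonormal_iff_ite]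
  intro k l
  rw [Function.comp_apply, Function.comp_apply, inner_blochVector, hunit, hunit]
  split_ifs with hkl
  · subst hkl
    rw [hunit]
    norm_num
  · rw [hunbiased hkl]
    norm_num

theorem card_le_three_of_pairwise_unbiased {ι : Type*} [Fintype ι] (v : ι → Fin 2 → ℂ)
    (hunit : ∀ k, star (v k) ⬝ᵥ v k = 1)
    (hunbiased : Pairwise fun k l => ‖star (v k) ⬝ᵥ v l‖ ^ 2 = 1 / 2) :
    Fintype.card ι ≤ 3 := by
  simpa using (orthonormal_blochVector v hunit hunbiased).linearIndependent.fintype_card_le_finrank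

theorem at_most_three_mubs_qubit (n : ℕ)
    (B : Fin n → Fin 2 → Fin 2 → ℂ)
    (horth : ∀ k, ∀ i j, star (B k i) ⬝ᵥ B k j = if i = j then (1 : ℂ) else 0)
    (hmub : ∀ k l, k ≠ l → ∀ i j,
      ‖star (B k i) ⬝ᵥ B l j‖ ^ 2 = 1 / 2) :
    n ≤ 3 := by
  simpa using card_le_three_of_pairwise_unbiased (fun k => B k 0) (fun k => horth k 0 0)
    fun k l hkl => hmub k l hkl 0 0
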